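/- Let R be a commutative ring and x_1, …, x_n a regular sequence in R. Then the Koszul complex on x_1,…,x_n is a free resolution of R/(x_1,…,x_n); in particular the higher Koszul homology groups vanish. -/
import Mathlib


open ExteriorAlgebra
open CliffordAlgebra

set_option maxHeartbeats 1000000

section KoszulAux

open ExteriorAlgebra CliffordAlgebra

variable {R : Type*} [CommRing R] {M : Type*} [AddCommGroup M] [Module R M]

lemma contract_iMulti (g : Module.Dual R M) :
    ∀ (i : ℕ) (v : Fin (i+1) → M),
      contractLeft (Q := 0) g (ιMulti R (i+1) v) =
        ∑ j : Fin (i+1), ((-1:R)^(j:ℕ) * g (v j)) • ιMulti R i (fun k => v (j.succAbove k)) := by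
  intro i
  induction i with
  | zero =>
    intro v
    simp [ιMulti_succ_apply, ιMulti_zero_apply, Algebra.algebraMap_eq_smul_one]
  | succ i ih =>
    intro v
    have hv : ιMulti R (i+1+1) v = ι R (v 0) * ιMulti R (i+1) (Matrix.vecTail v) :=
      ιMulti_succ_apply v
    rw [hv, contractLeft_ι_mul, ih (Matrix.vecTail v), sub_eq_add_neg]
    conv_rhs => rw [Fin.sum_univ_succ]
    congr 1
    · simp [Matrix.vecTail, Function.comp_def]
    · rw [Finset.mul_sum, ← Finset.sum_neg_distrib]
      refine Finset.sum_congr rfl fun j _ => ?_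
      rw [mul_smul_comm]
      have h1 : ι (M := M) R (v 0) * ιMulti R i (fun k => Matrix.vecTail v (j.succAbove k)) =
          ιMulti R (i+1) (fun k => v ((Fin.succ j).succAbove k)) := by
        have h2 : (fun k : Fin (i+1) => v ((Fin.succ j).succAbove k)) =
            Matrix.vecCons (v 0) (fun k => Matrix.vecTail v (j.succAbove k)) := by
          funext k
          refine Fin.cases ?_ (fun k => ?_) k
          · simp [Fin.succ_succAbove_zero]
          · simp [Fin.succ_succAbove_succ, Matrix.vecTail, Function.comp_def]
        rw [h2, ιMulti_succ_apply]
        simp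
      rw [h1, ← neg_smul]
      congr 1
      simp only [Matrix.vecTail, Function.comp_def, Fin.val_succ, pow_succ]
      ring

lemma contract_mem_power (g : Module.Dual R M) :
    ∀ (i : ℕ) (z : ExteriorAlgebra R M), z ∈ ⋀[R]^(i+1) M →
      contractLeft (Q := 0) g z ∈ ⋀[R]^i M := by
  intro i
  induction i with
  | zero =>
    intro z hz
    have hz' : z ∈ LinearMap.range (ι R : M →ₗ[R] ExteriorAlgebra R M) ^ (0+1) := hz
    rw [pow_one] at hz'
    obtain ⟨m, rfl⟩ := hz'
    rw [contractLeft_ι]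
    show _ ∈ LinearMap.range (ι R : M →ₗ[R] ExteriorAlgebra R M) ^ 0
    rw [pow_zero]
    exact Submodule.mem_one.mpr ⟨g m, rfl⟩
  | succ i ih =>
    intro z hz
    have hz' : z ∈ LinearMap.range (ι R : M →ₗ[R] ExteriorAlgebra R M) ^ (i+1+1) := hz
    rw [pow_succ'] at hz'
    refine Submodule.mul_induction_on hz' (fun m hm y hy => ?_) (fun a b ha hb => ?_)
    · obtain ⟨u, rfl⟩ := hm
      rw [contractLeft_ι_mul]
      refine sub_mem (Submodule.smul_mem _ _ hy) ?_
      show _ ∈ LinearMap.range (ι R : M →ₗ[R] ExteriorAlgebra R M) ^ (i+1)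
      rw [pow_succ']
      exact Submodule.mul_mem_mul (LinearMap.mem_range_self _ u) (ih y hy)
    · rw [map_add]
      exact add_mem ha hb

lemma map_mem_exteriorPower {N : Type*} [AddCommGroup N] [Module R N] (f : M →ₗ[R] N) :
    ∀ (k : ℕ) (z : ExteriorAlgebra R M), z ∈ ⋀[R]^k M →
      ExteriorAlgebra.map f z ∈ ⋀[R]^k N := by
  intro k
  induction k with
  | zero =>
    intro z hz
    have hz' : z ∈ LinearMap.range (ι R : M →ₗ[R] ExteriorAlgebra R M) ^ 0 := hz
    rw [pow_zero] at hz'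
    obtain ⟨r, rfl⟩ := Submodule.mem_one.mp hz'
    show _ ∈ LinearMap.range (ι R : N →ₗ[R] ExteriorAlgebra R N) ^ 0
    rw [pow_zero]
    exact Submodule.mem_one.mpr ⟨r, by simp⟩
  | succ k ih =>
    intro z hz
    have hz' : z ∈ LinearMap.range (ι R : M →ₗ[R] ExteriorAlgebra R M) ^ (k+1) := hz
    rw [pow_succ'] at hz'
    show _ ∈ LinearMap.range (ι R : N →ₗ[R] ExteriorAlgebra R N) ^ (k+1)
    rw [pow_succ']
    refine Submodule.mul_induction_on hz' (fun m hm y hy => ?_) (fun a b ha hb => ?_)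
    · obtain ⟨u, rfl⟩ := hm
      rw [map_mul, ExteriorAlgebra.map_apply_ι]
      exact Submodule.mul_mem_mul (LinearMap.mem_range_self _ _) (ih y hy)
    · rw [map_add]
      exact add_mem ha hb

variable (R) in
/-- The dual functional `m ↦ ∑ l, x l * m l`. -/
def kf {n : ℕ} (x : Fin n → R) : Module.Dual R (Fin n → R) where
  toFun m := ∑ l, x l * m l
  map_add' a b := by simp [mul_add, Finset.sum_add_distrib]
  map_smul' r a := by simp [Finset.mul_sum, mul_left_comm]

@[simp] lemma kf_apply {n : ℕ} (x : Fin n → R) (m : Fin n → R) :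
    kf R x m = ∑ l, x l * m l := rfl

section Step

variable {n : ℕ}

variable (R n) in
/-- extension by zero in the last coordinate -/
def rho : (Fin n → R) →ₗ[R] (Fin (n+1) → R) where
  toFun m := Fin.snoc m 0
  map_add' a b := by
    funext j
    refine Fin.lastCases ?_ (fun j => ?_) j <;> simp
  map_smul' r a := by
    funext j
    refine Fin.lastCases ?_ (fun j => ?_) j <;> simp

@[simp] lemma rho_castSucc (m : Fin n → R) (j : Fin n) :
    rho R n m (Fin.castSucc j) = m j := by simp [rho]

@[simp] lemma rho_last (m : Fin n → R) : rho R n m (Fin.last n) = 0 := by simp [rho]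

variable (R n) in
/-- the last basis vector -/
def evec : Fin (n+1) → R := Fin.snoc 0 1

variable (R n) in
/-- the last dual coordinate -/
def eps : Module.Dual R (Fin (n+1) → R) := LinearMap.proj (Fin.last n)

variable (R n) in
/-- the inclusion of exterior algebras -/
def psi : ExteriorAlgebra R (Fin n → R) →ₐ[R] ExteriorAlgebra R (Fin (n+1) → R) :=
  ExteriorAlgebra.map (rho R n)

lemma kf_rho (x : Fin (n+1) → R) (m : Fin n → R) :
    kf R x (rho R n m) = kf R (Fin.init x) (m) := by
  simp [Fin.sum_univ_castSucc, Fin.init, rho, Fin.snoc_castSucc]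

lemma kf_evec (x : Fin (n+1) → R) : kf R x (evec R n) = x (Fin.last n) := by
  simp [Fin.sum_univ_castSucc, evec, Fin.snoc_castSucc]

lemma eps_rho (m : Fin n → R) : eps R n (rho R n m) = 0 := by simp [eps]

lemma eps_evec : eps R n (evec R n) = 1 := by simp [eps, evec]

lemma sig_rho : (LinearMap.funLeft R R Fin.castSucc).comp (rho R n) = LinearMap.id := by
  ext m j
  simp [rho]

lemma psi_inj : Function.Injective (psi R n) := by
  intro u v h
  have h2 := congrArg (ExteriorAlgebra.map (LinearMap.funLeft R R Fin.castSucc)) h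
  simpa [psi, ← AlgHom.comp_apply, ExteriorAlgebra.map_comp_map, sig_rho] using h2

lemma psi_mem (k : ℕ) (z : ExteriorAlgebra R (Fin n → R)) (hz : z ∈ ⋀[R]^k (Fin n → R)) :
    psi R n z ∈ ⋀[R]^k (Fin (n+1) → R) := map_mem_exteriorPower _ k z hz

lemma D_psi (x : Fin (n+1) → R) (z : ExteriorAlgebra R (Fin n → R)) :
    contractLeft (Q := 0) (kf R x) (psi R n z) =
      psi R n (contractLeft (Q := 0) (kf R (Fin.init x)) z) := by
  have hspan := ExteriorAlgebra.ιMulti_span (R := R) (M := (Fin n → R))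
  have hz : z ∈ (⊤ : Submodule R (ExteriorAlgebra R (Fin n → R))) := trivial
  rw [← hspan] at hz
  induction hz using Submodule.span_induction with
  | mem w hw =>
    obtain ⟨⟨i, v⟩, rfl⟩ := hw
    cases i with
    | zero =>
      simp only [ιMulti_zero_apply, map_one, contractLeft_one, map_zero]
    | succ i =>
      rw [show psi R n (ιMulti R (i+1) v) = ιMulti R (i+1) (rho R n ∘ v) from
        map_apply_ιMulti _ v]
      rw [contract_iMulti, contract_iMulti, map_sum]
      refine Finset.sum_congr rfl fun j _ => ?_
      rw [map_smul]
      rw [show psi R n (ιMulti R i fun k => v (j.succAbove k)) =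
        ιMulti R i (rho R n ∘ fun k => v (j.succAbove k)) from map_apply_ιMulti _ _]
      simp only [Function.comp_apply, Function.comp_def, kf_rho]
  | zero => simp
  | add a b _ _ ha hb => rw [map_add, map_add, map_add, ha, hb]; rw [map_add]
  | smul r a _ ha => rw [map_smul, map_smul, map_smul, ha]; rw [map_smul]

lemma eps_psi (z : ExteriorAlgebra R (Fin n → R)) :
    contractLeft (Q := 0) (eps R n) (psi R n z) = 0 := by
  have hspan := ExteriorAlgebra.ιMulti_span (R := R) (M := (Fin n → R))
  have hz : z ∈ (⊤ : Submodule R (ExteriorAlgebra R (Fin n → R))) := trivial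
  rw [← hspan] at hz
  induction hz using Submodule.span_induction with
  | mem w hw =>
    obtain ⟨⟨i, v⟩, rfl⟩ := hw
    cases i with
    | zero => simp only [ιMulti_zero_apply, map_one, contractLeft_one]
    | succ i =>
      rw [show psi R n (ιMulti R (i+1) v) = ιMulti R (i+1) (rho R n ∘ v) from
        map_apply_ιMulti _ v]
      rw [contract_iMulti]
      refine Finset.sum_eq_zero fun j _ => ?_
      simp [eps_rho]
  | zero => simp
  | add a b _ _ ha hb => rw [map_add, map_add, ha, hb, add_zero]
  | smul r a _ ha => rw [map_smul, map_smul, ha, smul_zero]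

lemma iota_decomp (m : Fin (n+1) → R) :
    ι R m = psi R n (ι R (fun j => m (Fin.castSucc j))) +
      ι R (evec R n) * psi R n (algebraMap R _ (m (Fin.last n))) := by
  rw [show psi R n (ι R (fun j => m (Fin.castSucc j))) =
      ι R (rho R n (fun j => m (Fin.castSucc j))) from ExteriorAlgebra.map_apply_ι _ _,
    AlgHom.commutes, ← Algebra.commutes, Algebra.smul_def (m (Fin.last n)) (ι R (evec R n)) |>.symm,
    ← map_smul, ← map_add]
  congr 1
  funext j
  refine Fin.lastCases ?_ (fun j => ?_) j <;> simp [evec]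

lemma decomp : ∀ (p : ℕ) (z : ExteriorAlgebra R (Fin (n+1) → R)),
    z ∈ ⋀[R]^(p+1) (Fin (n+1) → R) →
    ∃ a ∈ ⋀[R]^(p+1) (Fin n → R), ∃ b ∈ ⋀[R]^p (Fin n → R),
      z = psi R n a + ι R (evec R n) * psi R n b := by
  intro p
  induction p with
  | zero =>
    intro z hz
    have hz' : z ∈ LinearMap.range (ι R : (Fin (n+1) → R) →ₗ[R] _) ^ (0+1) := hz
    rw [pow_one] at hz'
    obtain ⟨m, rfl⟩ := hz'
    refine ⟨ι R (fun j => m (Fin.castSucc j)), ?_, algebraMap R _ (m (Fin.last n)), ?_, ?_⟩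
    · show _ ∈ LinearMap.range (ι R : (Fin n → R) →ₗ[R] _) ^ (0+1)
      rw [pow_one]; exact LinearMap.mem_range_self _ _
    · show _ ∈ LinearMap.range (ι R : (Fin n → R) →ₗ[R] _) ^ 0
      rw [pow_zero]; exact Submodule.mem_one.mpr ⟨_, rfl⟩
    · exact iota_decomp m
  | succ p ih =>
    intro z hz
    have hz' : z ∈ LinearMap.range (ι R : (Fin (n+1) → R) →ₗ[R] _) ^ (p+1+1) := hz
    rw [pow_succ'] at hz'
    refine Submodule.mul_induction_on hz' (fun mm hm y hy => ?_) (fun a b ha hb => ?_)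
    · obtain ⟨u, rfl⟩ := hm
      obtain ⟨a, ha, b, hb, rfl⟩ := ih y hy
      refine ⟨ι R (fun j => u (Fin.castSucc j)) * a, ?_,
        u (Fin.last n) • a - ι R (fun j => u (Fin.castSucc j)) * b, ?_, ?_⟩
      · show _ ∈ LinearMap.range (ι R : (Fin n → R) →ₗ[R] _) ^ (p+1+1)
        rw [pow_succ']
        exact Submodule.mul_mem_mul (LinearMap.mem_range_self _ _) ha
      · refine sub_mem (Submodule.smul_mem _ _ ha) ?_
        show _ ∈ LinearMap.range (ι R : (Fin n → R) →ₗ[R] _) ^ (p+1)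
        rw [pow_succ']
        exact Submodule.mul_mem_mul (LinearMap.mem_range_self _ _) hb
      · have hcom : ∀ w : Fin n → R, psi R n (ExteriorAlgebra.ι R w) * ExteriorAlgebra.ι R (evec R n) =
            -(ExteriorAlgebra.ι R (evec R n) * psi R n (ExteriorAlgebra.ι R w)) := by
          intro w
          rw [show psi R n (ExteriorAlgebra.ι R w) = ExteriorAlgebra.ι R (rho R n w) from
            ExteriorAlgebra.map_apply_ι _ _]
          exact eq_neg_of_add_eq_zero_left (ι_add_mul_swap _ _)
        have hψc : ∀ c : R, psi R n (algebraMap R _ c) =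
            algebraMap R (ExteriorAlgebra R (Fin (n+1) → R)) c := fun c => AlgHom.commutes _ _
        have key : ∀ (u' : Fin n → R) (c : R),
            (psi R n (ExteriorAlgebra.ι R u') +
              ExteriorAlgebra.ι R (evec R n) * algebraMap R _ c) *
              (psi R n a + ExteriorAlgebra.ι R (evec R n) * psi R n b)
            = psi R n (ExteriorAlgebra.ι R u' * a) +
              ExteriorAlgebra.ι R (evec R n) * psi R n (c • a - ExteriorAlgebra.ι R u' * b) := by
          intro u' c
          set e : ExteriorAlgebra R (Fin (n+1) → R) := ExteriorAlgebra.ι R (evec R n) with he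
          have t2 : psi R n (ExteriorAlgebra.ι R u') * (e * psi R n b) =
              -(e * psi R n (ExteriorAlgebra.ι R u' * b)) := by
            rw [← mul_assoc, hcom u', neg_mul, mul_assoc, ← map_mul]
          have t3 : (e * algebraMap R _ c) * psi R n a = e * psi R n (c • a) := by
            rw [mul_assoc, ← hψc c, ← map_mul, ← Algebra.smul_def]
          have t4 : (e * algebraMap R _ c) * (e * psi R n b) = 0 := by
            rw [← Algebra.commutes c e, mul_assoc, ← mul_assoc e e, he, ι_sq_zero, zero_mul,
              mul_zero]
          rw [add_mul, mul_add, mul_add, t2, t3, t4, ← map_mul, map_sub, mul_sub]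
          abel
        rw [iota_decomp u, hψc]
        exact key _ _
    · obtain ⟨a1, ha1, b1, hb1, rfl⟩ := ha
      obtain ⟨a2, ha2, b2, hb2, rfl⟩ := hb
      refine ⟨a1 + a2, add_mem ha1 ha2, b1 + b2, add_mem hb1 hb2, ?_⟩
      rw [map_add, map_add, mul_add]
      abel

lemma beta_decomp (a b : ExteriorAlgebra R (Fin n → R)) :
    contractLeft (Q := 0) (eps R n) (psi R n a + ι R (evec R n) * psi R n b) = psi R n b := by
  rw [map_add, eps_psi, contractLeft_ι_mul, eps_psi, eps_evec, mul_zero, sub_zero, one_smul,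
    zero_add]

lemma decomp_uniq {a b a' b' : ExteriorAlgebra R (Fin n → R)}
    (h : psi R n a + ι R (evec R n) * psi R n b =
      psi R n a' + ι R (evec R n) * psi R n b') : a = a' ∧ b = b' := by
  have hb : b = b' := psi_inj (by simpa [beta_decomp] using congrArg (contractLeft (Q := 0) (eps R n)) h)
  subst hb
  refine ⟨psi_inj ?_, rfl⟩
  exact add_right_cancel h

end Step

section Reg

open RingTheory.Sequence

lemma ofList_ofFn {k : ℕ} (f : Fin k → R) :
    Ideal.ofList (List.ofFn f) = Ideal.span (Set.range f) := by
  have : {r | r ∈ List.ofFn f} = Set.range f := by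
    ext r
    simp [List.mem_ofFn]
  rw [Ideal.ofList, this]

lemma ideal_smul_top (I : Ideal R) : I • (⊤ : Submodule R R) = I := by
  refine le_antisymm (Submodule.smul_le.mpr fun r hr m _ => ?_) (fun i hi => ?_)
  · simpa using I.mul_mem_right m hr
  · simpa using Submodule.smul_mem_smul hi (Submodule.mem_top (x := (1:R)))

lemma ofFn_eq_append {n : ℕ} (x : Fin (n+1) → R) :
    List.ofFn x = List.ofFn (Fin.init x) ++ [x (Fin.last n)] := by
  rw [List.ofFn_succ', List.concat_eq_append]
  rfl

lemma weak_init {n : ℕ} {x : Fin (n+1) → R} (h : IsWeaklyRegular R (List.ofFn x)) :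
    IsWeaklyRegular R (List.ofFn (Fin.init x)) := by
  constructor
  intro i hi
  have hlen : (List.ofFn (Fin.init x)).length = n := by simp
  have hi' : i < (List.ofFn x).length := by simp; omega
  have h2 := h.regular_mod_prev i hi'
  have htake : (List.ofFn x).take i = (List.ofFn (Fin.init x)).take i := by
    rw [ofFn_eq_append x, List.take_append_of_le_length (by omega)]
  have hget : (List.ofFn x)[i]'hi' = (List.ofFn (Fin.init x))[i]'hi := by
    rw [List.getElem_ofFn, List.getElem_ofFn]
    simp [Fin.init]
  rw [htake, hget] at h2
  exact h2

lemma last_reg {n : ℕ} {x : Fin (n+1) → R} (h : IsWeaklyRegular R (List.ofFn x)) :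
    ∀ r : R, x (Fin.last n) * r ∈ Ideal.span (Set.range (Fin.init x)) →
      r ∈ Ideal.span (Set.range (Fin.init x)) := by
  have hn : n < (List.ofFn x).length := by simp
  have h2 := h.regular_mod_prev n hn
  have htake : (List.ofFn x).take n = List.ofFn (Fin.init x) := by
    rw [ofFn_eq_append x, List.take_append_of_le_length (by simp), List.take_of_length_le (by simp)]
  have hget : (List.ofFn x)[n]'hn = x (Fin.last n) := by
    rw [List.getElem_ofFn]
    rfl
  rw [htake, hget, ofList_ofFn, ideal_smul_top] at h2
  intro r hr
  have hz : x (Fin.last n) • (Submodule.Quotient.mk r :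
      R ⧸ (Ideal.span (Set.range (Fin.init x)) : Submodule R R)) = 0 := by
    rw [← Submodule.Quotient.mk_smul, smul_eq_mul]
    exact (Submodule.Quotient.mk_eq_zero _).mpr hr
  have := h2 (a₁ := Submodule.Quotient.mk r) (a₂ := 0) (by simpa using hz)
  exact (Submodule.Quotient.mk_eq_zero _).mp this

end Reg

lemma Dz_eq {n : ℕ} (x : Fin (n+1) → R) (a b : ExteriorAlgebra R (Fin n → R)) :
    contractLeft (Q := 0) (kf R x) (psi R n a + ExteriorAlgebra.ι R (evec R n) * psi R n b) =
      psi R n (contractLeft (Q := 0) (kf R (Fin.init x)) a + x (Fin.last n) • b) +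
        ExteriorAlgebra.ι R (evec R n) *
          psi R n (-(contractLeft (Q := 0) (kf R (Fin.init x)) b)) := by
  rw [map_add, D_psi, contractLeft_ι_mul, kf_evec, D_psi, map_add, map_smul, map_neg, mul_neg,
    sub_eq_add_neg]
  abel

theorem koszul_main :
    ∀ (n : ℕ) (x : Fin n → R), RingTheory.Sequence.IsWeaklyRegular R (List.ofFn x) →
    ((∀ (i : ℕ) (z : ExteriorAlgebra R (Fin n → R)), z ∈ ⋀[R]^(i+1) (Fin n → R) →
        contractLeft (Q := 0) (kf R x) z = 0 →
        ∃ w ∈ ⋀[R]^(i+1+1) (Fin n → R), contractLeft (Q := 0) (kf R x) w = z) ∧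
     (∀ r : R, (∃ z ∈ ⋀[R]^(0+1) (Fin n → R),
        contractLeft (Q := 0) (kf R x) z = algebraMap R _ r) ↔
        r ∈ Ideal.span (Set.range x))) := by
  intro n
  induction n with
  | zero =>
    intro x _
    have hiota : (ι R : (Fin 0 → R) →ₗ[R] ExteriorAlgebra R (Fin 0 → R)) = 0 := by
      refine LinearMap.ext fun m => ?_
      have hm : m = 0 := funext fun j => j.elim0
      rw [hm, map_zero]
      rfl
    have hbot : LinearMap.range (ι R : (Fin 0 → R) →ₗ[R] ExteriorAlgebra R (Fin 0 → R)) = ⊥ := by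
      rw [hiota, LinearMap.range_zero]
    have hzero : ∀ (i : ℕ) (z : ExteriorAlgebra R (Fin 0 → R)),
        z ∈ ⋀[R]^(i+1) (Fin 0 → R) → z = 0 := by
      intro i z hz
      have hz' : z ∈ LinearMap.range (ι R : (Fin 0 → R) →ₗ[R] _) ^ (i+1) := hz
      rw [pow_succ', hbot, Submodule.bot_mul] at hz'
      simpa using hz'
    constructor
    · intro i z hz hD
      exact ⟨0, zero_mem _, by rw [map_zero, hzero i z hz]⟩
    · intro r
      constructor
      · rintro ⟨z, hz, hDz⟩
        rw [hzero 0 z hz, map_zero] at hDz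
        have : r = 0 := by
          have := ExteriorAlgebra.algebraMap_leftInverse (R := R) (M := (Fin 0 → R))
          have h0 : algebraMap R (ExteriorAlgebra R (Fin 0 → R)) r =
              algebraMap R (ExteriorAlgebra R (Fin 0 → R)) 0 := by rw [map_zero, ← hDz]
          exact this.injective h0
        rw [this]
        exact zero_mem _
      · intro hr
        rw [Set.range_eq_empty x, Ideal.span_empty, Ideal.mem_bot] at hr
        exact ⟨0, zero_mem _, by rw [map_zero, hr, map_zero]⟩
  | succ n ih =>
    intro x hx
    obtain ⟨ihA, ihB⟩ := ih (Fin.init x) (weak_init hx)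
    have hreg := last_reg hx
    set E := ExteriorAlgebra R (Fin (n+1) → R)
    set e : E := ExteriorAlgebra.ι R (evec R n) with he
    set xL : R := x (Fin.last n) with hxL
    set D' := contractLeft (Q := 0) (kf R (Fin.init x))
    -- the key cycle-to-boundary argument
    have claimA : ∀ (i : ℕ) (z : E), z ∈ ⋀[R]^(i+1) (Fin (n+1) → R) →
        contractLeft (Q := 0) (kf R x) z = 0 →
        ∃ w ∈ ⋀[R]^(i+1+1) (Fin (n+1) → R), contractLeft (Q := 0) (kf R x) w = z := by
      intro i z hz hDz
      obtain ⟨a, ha, b, hb, rfl⟩ := decomp i z hz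
      rw [Dz_eq] at hDz
      have hDz' : psi R n (D' a + xL • b) + e * psi R n (-(D' b)) =
          psi R n 0 + e * psi R n 0 := by
        simp only [map_zero, mul_zero, add_zero]
        exact hDz
      obtain ⟨h1, h2⟩ := decomp_uniq hDz'
      have h2' : D' b = 0 := by
        have := congrArg (fun t => -t) h2
        simpa using this
      have h1' : D' a = -(xL • b) := by
        have := congrArg (fun t => t - xL • b) h1
        simpa using this
      -- find c with D' c = b
      have hc : ∃ c ∈ ⋀[R]^(i+1) (Fin n → R), D' c = b := by
        cases i with
        | zero =>
          have hb' : b ∈ LinearMap.range (ι R : (Fin n → R) →ₗ[R] _) ^ 0 := hb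
          rw [pow_zero] at hb'
          obtain ⟨r', rfl⟩ := Submodule.mem_one.mp hb'
          have hsm : xL • algebraMap R (ExteriorAlgebra R (Fin n → R)) r' =
              algebraMap R (ExteriorAlgebra R (Fin n → R)) (xL * r') := by
            rw [map_mul, ← Algebra.smul_def]
          have hmem : -(xL * r') ∈ Ideal.span (Set.range (Fin.init x)) := by
            refine (ihB (-(xL * r'))).mp ⟨a, ha, ?_⟩
            rw [h1', hsm, ← map_neg]
          have hr' : r' ∈ Ideal.span (Set.range (Fin.init x)) :=
            hreg r' (by simpa using neg_mem hmem)
          exact (ihB r').mpr hr'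
        | succ i' =>
          exact ihA i' b hb h2'
      obtain ⟨c, hcmem, hDc⟩ := hc
      have ha1 : D' (a + xL • c) = 0 := by
        rw [map_add, map_smul, hDc, h1', neg_add_cancel]
      obtain ⟨c1, hc1mem, hDc1⟩ := ihA i (a + xL • c) (add_mem ha (Submodule.smul_mem _ _ hcmem)) ha1
      refine ⟨psi R n c1 + e * psi R n (-c), ?_, ?_⟩
      · refine add_mem (psi_mem _ _ hc1mem) ?_
        show _ ∈ LinearMap.range (ι R : (Fin (n+1) → R) →ₗ[R] _) ^ (i+1+1)
        rw [pow_succ']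
        exact Submodule.mul_mem_mul (LinearMap.mem_range_self _ _)
          (psi_mem _ _ (neg_mem hcmem))
      · rw [Dz_eq, hDc1]
        have hD'negc : contractLeft (Q := 0) (kf R (Fin.init x)) (-c) = -b := by
          rw [map_neg, hDc]
        rw [hD'negc, neg_neg, smul_neg, add_neg_cancel_right]
    refine ⟨claimA, ?_⟩
    intro r
    constructor
    · rintro ⟨z, hz, hDz⟩
      obtain ⟨a, ha, b, hb, rfl⟩ := decomp 0 z hz
      have hb' : b ∈ LinearMap.range (ι R : (Fin n → R) →ₗ[R] _) ^ 0 := hb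
      rw [pow_zero] at hb'
      obtain ⟨r', rfl⟩ := Submodule.mem_one.mp hb'
      rw [Dz_eq] at hDz
      have hDz' : psi R n (D' a + xL • algebraMap R _ r') + e * psi R n (-(D' (algebraMap R _ r'))) =
          psi R n (algebraMap R _ r) + e * psi R n 0 := by
        simp only [map_zero, mul_zero, add_zero]
        rw [AlgHom.commutes]
        exact hDz
      obtain ⟨h1, _⟩ := decomp_uniq hDz'
      have hD'a : D' a = algebraMap R _ (r - xL * r') := by
        have hsm : xL • algebraMap R (ExteriorAlgebra R (Fin n → R)) r' =
            algebraMap R (ExteriorAlgebra R (Fin n → R)) (xL * r') := by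
          rw [map_mul, ← Algebra.smul_def]
        rw [map_sub, ← h1, hsm]
        abel
      have hmem : r - xL * r' ∈ Ideal.span (Set.range (Fin.init x)) :=
        (ihB _).mp ⟨a, ha, hD'a⟩
      have hsub : Ideal.span (Set.range (Fin.init x)) ≤ Ideal.span (Set.range x) := by
        refine Ideal.span_mono ?_
        rintro _ ⟨j, rfl⟩
        exact ⟨Fin.castSucc j, rfl⟩
      have hxLmem : xL * r' ∈ Ideal.span (Set.range x) :=
        Ideal.mul_mem_right r' _ (Ideal.subset_span ⟨Fin.last n, rfl⟩)
      have := add_mem (hsub hmem) hxLmem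
      simpa using this
    · intro hr
      have hx_range : Set.range x = Set.range (Fin.init x) ∪ {xL} := by
        ext s
        constructor
        · rintro ⟨j, rfl⟩
          refine Fin.lastCases ?_ (fun j => ?_) j
          · exact Or.inr rfl
          · exact Or.inl ⟨j, rfl⟩
        · rintro (⟨j, rfl⟩ | rfl)
          · exact ⟨Fin.castSucc j, rfl⟩
          · exact ⟨Fin.last n, rfl⟩
      rw [hx_range, Ideal.span_union] at hr
      obtain ⟨s, hs, t, ht, rfl⟩ := Submodule.mem_sup.mp hr
      obtain ⟨t', rfl⟩ := Ideal.mem_span_singleton'.mp ht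
      obtain ⟨a, ha, hDa⟩ := (ihB s).mpr hs
      refine ⟨psi R n a + e * psi R n (algebraMap R _ t'), ?_, ?_⟩
      · refine add_mem (psi_mem _ _ ha) ?_
        show _ ∈ LinearMap.range (ι R : (Fin (n+1) → R) →ₗ[R] _) ^ (0+1)
        rw [pow_one, AlgHom.commutes, ← Algebra.commutes, ← Algebra.smul_def]
        exact Submodule.smul_mem _ _ (LinearMap.mem_range_self _ _)
      · rw [Dz_eq, hDa, contractLeft_algebraMap, neg_zero, map_zero, mul_zero, add_zero]
        show (psi R n) ((algebraMap R (ExteriorAlgebra R (Fin n → R))) s +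
            xL • (algebraMap R (ExteriorAlgebra R (Fin n → R))) t') =
          algebraMap R (ExteriorAlgebra R (Fin (n+1) → R)) (s + t' * xL)
        have h5 : (algebraMap R (ExteriorAlgebra R (Fin n → R))) s +
            xL • (algebraMap R (ExteriorAlgebra R (Fin n → R))) t' =
            (algebraMap R (ExteriorAlgebra R (Fin n → R))) (s + t' * xL) := by
          rw [Algebra.smul_def, ← map_mul, mul_comm t' xL]
          exact (map_add _ _ _).symm
        rw [h5]
        exact AlgHom.commutes _ _

end KoszulAux

/- STATEMENT 4: for a regular sequence x_1, …, x_n in a commutative ring R, the Koszul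
complex ⋀^• R^n (with differential given on generators by contraction with x) is a free
resolution of R/(x_1, …, x_n); in particular its higher homology vanishes.  Exactness is
expressed as ker = range at each step, and H_0 is identified with R/(x₁,…,xₙ) by the
statement that the image of d₀ : ⋀^1 R^n → ⋀^0 R^n = R is the ideal (x₁,…,xₙ). -/
theorem stmt4 {R : Type*} [CommRing R] {n : ℕ} (x : Fin n → R)
    (hreg : RingTheory.Sequence.IsRegular R (List.ofFn x))
    (d : ∀ i : ℕ, (⋀[R]^(i+1) (Fin n → R)) →ₗ[R] (⋀[R]^i (Fin n → R)))
    (hd : ∀ (i : ℕ) (v : Fin (i+1) → (Fin n → R)),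
      ((d i ⟨ιMulti R (i+1) v, ιMulti_range R (i+1) (Set.mem_range_self v)⟩ :
          ⋀[R]^i (Fin n → R)) : ExteriorAlgebra R (Fin n → R)) =
        ∑ j : Fin (i+1), ((-1 : R) ^ (j : ℕ) * (∑ l, x l * v j l)) •
          ιMulti R i (fun k => v (j.succAbove k))) :
    (∀ i : ℕ, LinearMap.ker (d i) = LinearMap.range (d (i+1))) ∧
    (∀ r : R, (algebraMap R (ExteriorAlgebra R (Fin n → R)) r ∈
        Submodule.map (⋀[R]^0 (Fin n → R)).subtype (LinearMap.range (d 0))) ↔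
      r ∈ Ideal.span (Set.range x)) := by
  have hd' : ∀ (i : ℕ) (z : ⋀[R]^(i+1) (Fin n → R)),
      ((d i z : ⋀[R]^i (Fin n → R)) : ExteriorAlgebra R (Fin n → R)) =
        contractLeft (Q := 0) (kf R x) (z : ExteriorAlgebra R (Fin n → R)) := by
    intro i z
    obtain ⟨y, hmem⟩ := z
    have hy : y ∈ Submodule.span R (Set.range (ιMulti R (i+1) (M := Fin n → R))) := by
      rw [ιMulti_span_fixedDegree]
      exact hmem
    revert hmem
    induction hy using Submodule.span_induction with
    | mem w hw =>
      obtain ⟨v, rfl⟩ := hw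
      intro hmem
      exact (hd i v).trans (contract_iMulti (kf R x) i v).symm
    | zero =>
      intro hmem
      rw [show (⟨0, hmem⟩ : ⋀[R]^(i+1) (Fin n → R)) = 0 from rfl, map_zero]
      simp
    | add a b ha hb iha ihb =>
      intro hmem
      have hA : a ∈ ⋀[R]^(i+1) (Fin n → R) := by
        rw [← ιMulti_span_fixedDegree]; exact ha
      have hB : b ∈ ⋀[R]^(i+1) (Fin n → R) := by
        rw [← ιMulti_span_fixedDegree]; exact hb
      rw [show (⟨a + b, hmem⟩ : ⋀[R]^(i+1) (Fin n → R)) = ⟨a, hA⟩ + ⟨b, hB⟩ from rfl,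
        map_add, Submodule.coe_add, iha hA, ihb hB, ← map_add]
      rfl
    | smul r a ha iha =>
      intro hmem
      have hA : a ∈ ⋀[R]^(i+1) (Fin n → R) := by
        rw [← ιMulti_span_fixedDegree]; exact ha
      rw [show (⟨r • a, hmem⟩ : ⋀[R]^(i+1) (Fin n → R)) = r • (⟨a, hA⟩ : ⋀[R]^(i+1) (Fin n → R))
        from rfl, map_smul, SetLike.val_smul, iha hA, ← map_smul]
      rfl
  obtain ⟨mainA, mainB⟩ := koszul_main n x hreg.toIsWeaklyRegular
  constructor
  · intro i
    ext z
    simp only [LinearMap.mem_ker, LinearMap.mem_range]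
    constructor
    · intro hz
      have hz' : contractLeft (Q := 0) (kf R x) (z : ExteriorAlgebra R (Fin n → R)) = 0 := by
        rw [← hd' i z, hz, ZeroMemClass.coe_zero]
      obtain ⟨w, hw, hDw⟩ := mainA i (z : ExteriorAlgebra R (Fin n → R)) z.2 hz'
      refine ⟨⟨w, hw⟩, ?_⟩
      apply Subtype.ext
      rw [hd' (i+1) ⟨w, hw⟩]
      exact hDw
    · rintro ⟨w, rfl⟩
      have h0 : ((d i (d (i+1) w) : ⋀[R]^i (Fin n → R)) : ExteriorAlgebra R (Fin n → R)) = 0 := by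
        rw [hd' i (d (i+1) w), hd' (i+1) w]
        exact contractLeft_contractLeft (d := kf R x) _
      exact Subtype.ext (h0.trans (ZeroMemClass.coe_zero _).symm)
  · intro r
    rw [Submodule.mem_map]
    constructor
    · rintro ⟨y, hy, hyr⟩
      obtain ⟨z, rfl⟩ := LinearMap.mem_range.mp hy
      exact (mainB r).mp ⟨(z : ExteriorAlgebra R (Fin n → R)), z.2, (hd' 0 z).symm.trans hyr⟩
    · intro hr
      obtain ⟨z, hz, hDz⟩ := (mainB r).mpr hr
      refine ⟨d 0 ⟨z, hz⟩, LinearMap.mem_range_self _ _, ?_⟩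
      show ((d 0 ⟨z, hz⟩ : ⋀[R]^0 (Fin n → R)) : ExteriorAlgebra R (Fin n → R)) = _
      rw [hd' 0 ⟨z, hz⟩]
      exact hDz
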